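/- arXiv:2304.14895 — 3 statements merged into one kernel-verified Lean document; each statement's English description precedes it below -/
import Mathlib

section
/- Let Z, U be real random variables, ε_A a random variable independent of (Z,U), γ, λ constants, and A = γZ + λU + ε_A. Then E(Z | ε_A, A) = E(Z | γZ + λU) almost surely; i.e., the conditional expectation of Z given the σ-algebra generated by (ε_A, A) equals the conditional expectation of Z given γZ + λU. -/
/-!
Write `W = γZ + λU`. Since `A - ε_A = W`, the pair `(ε_A, A)` generates `σ(ε_A) ⊔ σ(W)`, and
`σ(ε_A)` is independent of `σ(Z, U)`, which contains both `σ(W)` and `σ(Z)`. On a set `t ∩ u`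
with `t ∈ σ(ε_A)` and `u ∈ σ(W)`, independence factors the integrals of `Z` and of `E(Z | W)`
as `μ(t)` times their (equal) integrals over `u`; such sets form a π-system generating
`σ(ε_A) ⊔ σ(W)`, so `E(Z | W)` is also the conditional expectation of `Z` given `(ε_A, A)`.
-/

open MeasureTheory ProbabilityTheory Set

theorem MeasurableSpace.comap_prodMk_add {Ω G : Type*} [AddGroup G] [MeasurableSpace G]
    [MeasurableAdd₂ G] [MeasurableNeg G] (X Y : Ω → G) :
    MeasurableSpace.comap (fun ω => (X ω, X ω + Y ω)) inferInstance
      = MeasurableSpace.comap (fun ω => (X ω, Y ω)) inferInstance := by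
  change MeasurableSpace.comap (MeasurableEquiv.shearAddRight G ∘ fun ω => (X ω, Y ω)) _ = _
  rw [← MeasurableSpace.comap_comp, (MeasurableEquiv.shearAddRight G).measurableEmbedding.comap_eq]

theorem IsPiSystem.image2_inter {α : Type*} {C D : Set (Set α)} (hC : IsPiSystem C)
    (hD : IsPiSystem D) : IsPiSystem (image2 (· ∩ ·) C D) := by
  rintro _ ⟨s, hs, t, ht, rfl⟩ _ ⟨s', hs', t', ht', rfl⟩ hne
  rw [inter_inter_inter_comm] at hne ⊢
  exact mem_image2_of_mem (hC _ hs _ hs' (hne.mono inter_subset_left))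
    (hD _ ht _ ht' (hne.mono inter_subset_right))

theorem MeasurableSpace.generateFrom_image2_inter {α : Type*} (m₁ m₂ : MeasurableSpace α) :
    generateFrom (image2 (· ∩ ·) {s | MeasurableSet[m₁] s} {t | MeasurableSet[m₂] t})
      = m₁ ⊔ m₂ := by
  refine le_antisymm (generateFrom_le ?_) (sup_le (fun s hs => ?_) (fun t ht => ?_))
  · rintro _ ⟨s, hs, t, ht, rfl⟩
    exact (le_sup_left (b := m₂) s hs).inter (le_sup_right (a := m₁) t ht)
  · exact measurableSet_generateFrom ⟨s, hs, univ, MeasurableSet.univ, inter_univ s⟩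
  · exact measurableSet_generateFrom ⟨univ, MeasurableSet.univ, t, ht, univ_inter t⟩

theorem setIntegral_eq_of_isPiSystem {Ω E : Type*} [NormedAddCommGroup E] [NormedSpace ℝ E]
    {m m₀ : MeasurableSpace Ω} {μ : Measure Ω} {C : Set (Set Ω)} (hm : m ≤ m₀)
    (hgen : m = MeasurableSpace.generateFrom C) (hC : IsPiSystem C) {f g : Ω → E}
    (hf : Integrable f μ) (hg : Integrable g μ)
    (hfg : ∀ s ∈ C, ∫ x in s, f x ∂μ = ∫ x in s, g x ∂μ) (huniv : ∫ x, f x ∂μ = ∫ x, g x ∂μ)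
    {s : Set Ω} (hs : MeasurableSet[m] s) : ∫ x in s, f x ∂μ = ∫ x in s, g x ∂μ := by
  have h_apply : ∀ {h : Ω → E}, Integrable h μ → ∀ {s}, MeasurableSet[m] s →
      (μ.withDensityᵥ h).trim hm s = ∫ x in s, h x ∂μ := fun hh _ hs => by
    rw [VectorMeasure.trim_measurableSet_eq hm hs, withDensityᵥ_apply hh (hm _ hs)]
  have h_trim : (μ.withDensityᵥ f).trim hm = (μ.withDensityᵥ g).trim hm := by
    refine VectorMeasure.ext_of_generateFrom C (fun s hs => ?_) hgen hC ?_
    · have hs_m : MeasurableSet[m] s := hgen ▸ MeasurableSpace.measurableSet_generateFrom hs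
      rw [h_apply hf hs_m, h_apply hg hs_m, hfg s hs]
    · rw [h_apply hf MeasurableSet.univ, h_apply hg MeasurableSet.univ, setIntegral_univ,
        setIntegral_univ, huniv]
  rw [← h_apply hf hs, ← h_apply hg hs, h_trim]

section

variable {Ω E : Type*} [NormedAddCommGroup E] [NormedSpace ℝ E] [CompleteSpace E]
  {m m₁ m₂ : MeasurableSpace Ω} [mΩ : MeasurableSpace Ω] {μ : Measure Ω} [IsFiniteMeasure μ]
  {f : Ω → E}

theorem setIntegral_eq_measureReal_smul_integral_of_indep (hm₁ : m₁ ≤ mΩ) (hm₂ : m₂ ≤ mΩ)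
    (hf : StronglyMeasurable[m₁] f) (hfi : Integrable f μ) (hindep : Indep m₁ m₂ μ)
    {s : Set Ω} (hs : MeasurableSet[m₂] s) :
    ∫ x in s, f x ∂μ = μ.real s • ∫ x, f x ∂μ := by
  rw [← setIntegral_condExp hm₂ hfi hs,
    integral_congr_ae (ae_restrict_of_ae (condExp_indep_eq hm₁ hm₂ hf hindep)), setIntegral_const]

theorem condExp_sup_ae_eq_condExp_of_indep (hm₁ : m₁ ≤ mΩ) (hm₂ : m₂ ≤ mΩ) (hm : m ≤ m₁)
    (hf : StronglyMeasurable[m₁] f) (hfi : Integrable f μ) (hindep : Indep m₁ m₂ μ) :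
    μ[f | m₂ ⊔ m] =ᵐ[μ] μ[f | m] := by
  have hmΩ : m ≤ mΩ := hm.trans hm₁
  have hsup : m₂ ⊔ m ≤ mΩ := sup_le hm₂ hmΩ
  have hg : StronglyMeasurable[m₁] (μ[f | m]) := stronglyMeasurable_condExp.mono hm
  have hgi : Integrable (μ[f | m]) μ := integrable_condExp
  have h_rect : ∀ s ∈ image2 (· ∩ ·) {t | MeasurableSet[m₂] t} {u | MeasurableSet[m] u},
      ∫ x in s, (μ[f | m]) x ∂μ = ∫ x in s, f x ∂μ := by
    rintro _ ⟨t, ht, u, hu, rfl⟩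
    rw [← setIntegral_indicator (hmΩ u hu), ← setIntegral_indicator (hmΩ u hu),
      setIntegral_eq_measureReal_smul_integral_of_indep hm₁ hm₂ (hg.indicator (hm u hu))
        (hgi.indicator (hmΩ u hu)) hindep ht,
      setIntegral_eq_measureReal_smul_integral_of_indep hm₁ hm₂ (hf.indicator (hm u hu))
        (hfi.indicator (hmΩ u hu)) hindep ht,
      integral_indicator (hmΩ u hu), integral_indicator (hmΩ u hu),
      setIntegral_condExp hmΩ hfi hu]
  refine (ae_eq_condExp_of_forall_setIntegral_eq hsup hfi (fun s _ _ => hgi.integrableOn)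
    (fun s hs _ => setIntegral_eq_of_isPiSystem hsup
      (MeasurableSpace.generateFrom_image2_inter m₂ m).symm
      ((@MeasurableSpace.isPiSystem_measurableSet Ω m₂).image2_inter
        (@MeasurableSpace.isPiSystem_measurableSet Ω m))
      hgi hfi h_rect (integral_condExp hmΩ) hs)
    (stronglyMeasurable_condExp.mono (le_sup_right : m ≤ m₂ ⊔ m)).aestronglyMeasurable).symm

end

theorem stmt4_general {Ω : Type*} [MeasurableSpace Ω] (μ : Measure Ω) [IsProbabilityMeasure μ]
    (Z U εA : Ω → ℝ) (hmZ : Measurable Z) (hmU : Measurable U) (hmε : Measurable εA)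
    (hZint : Integrable Z μ)
    (hindep : IndepFun εA (fun ω => (Z ω, U ω)) μ)
    (γ lam : ℝ) (A : Ω → ℝ) (hA : ∀ ω, A ω = γ * Z ω + lam * U ω + εA ω) :
    μ[Z | MeasurableSpace.comap (fun ω => (εA ω, A ω)) inferInstance]
      =ᵐ[μ] μ[Z | MeasurableSpace.comap (fun ω => γ * Z ω + lam * U ω) inferInstance] := by
  have hA' : (fun ω => (εA ω, A ω)) = fun ω => (εA ω, εA ω + (γ * Z ω + lam * U ω)) :=
    funext fun ω => Prod.ext rfl (by rw [hA]; ring)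
  have hσ : MeasurableSpace.comap (fun ω => (εA ω, A ω)) inferInstance
      = MeasurableSpace.comap εA inferInstance
        ⊔ MeasurableSpace.comap (fun ω => γ * Z ω + lam * U ω) inferInstance := by
    rw [hA']
    exact (MeasurableSpace.comap_prodMk_add _ _).trans (MeasurableSpace.comap_prodMk _ _)
  have hZU : Measurable[MeasurableSpace.comap (fun ω => (Z ω, U ω)) inferInstance]
      fun ω => (Z ω, U ω) := comap_measurable _
  have hW : Measurable[MeasurableSpace.comap (fun ω => (Z ω, U ω)) inferInstance]
      fun ω => γ * Z ω + lam * U ω :=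
    (measurable_const.mul (measurable_fst.comp hZU)).add
      (measurable_const.mul (measurable_snd.comp hZU))
  rw [hσ]
  exact condExp_sup_ae_eq_condExp_of_indep (hmZ.prodMk hmU).comap_le hmε.comap_le hW.comap_le
    (measurable_fst.comp hZU).stronglyMeasurable hZint hindep.symm

/-- With ε_A independent of (Z,U) and A = γZ + λU + ε_A,
E(Z | ε_A, A) = E(Z | γZ + λU) almost surely. -/
theorem stmt4 {Ω : Type*} [MeasurableSpace Ω] (μ : Measure Ω) [IsProbabilityMeasure μ]
    (Z U εA : Ω → ℝ) (hmZ : Measurable Z) (hmU : Measurable U) (hmε : Measurable εA)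
    (hZint : Integrable Z μ) (hUint : Integrable U μ) (hεint : Integrable εA μ)
    (hindep : IndepFun εA (fun ω => (Z ω, U ω)) μ)
    (γ lam : ℝ) (A : Ω → ℝ) (hA : ∀ ω, A ω = γ * Z ω + lam * U ω + εA ω) :
    μ[Z | MeasurableSpace.comap (fun ω => (εA ω, A ω)) inferInstance]
      =ᵐ[μ] μ[Z | MeasurableSpace.comap (fun ω => γ * Z ω + lam * U ω) inferInstance] :=
  stmt4_general μ Z U εA hmZ hmU hmε hZint hindep γ lam A hA
end

section
/- Let Z ~ N(0,1), U ~ N(0,1), and ε_A ~ Uniform(-1,1) be independent, and A = Z + U + ε_A. Then E[ZA]/E[A²] = 3/7 and E[ZA³]/E[A⁴] = 35/81; since these ratios differ, there is no constant k with E[(Z - kA)·f(A)] = 0 for all polynomials f, hence E(Z|A) is not a.s. linear in A. -/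
/-!
Write `A = Z + W` with `W = U + ε_A` independent of `Z`. Expanding binomially and factoring by
independence, every mixed moment `E[Z^a A^n]` is a polynomial in the moments of `N(0,1)`
(`(n-1)‼` for even `n`, from the Gamma integral) and of `Uniform(-1,1)` (`1/(n+1)` for even
`n`); this gives `E[ZA] = 1`, `E[A²] = 7/3`, `E[ZA³] = 7`, `E[A⁴] = 81/5`. Orthogonality of
`Z - kA` to `A` and to `A³` forces `k = 3/7` and `k = 35/81`. If `E(Z|A) = cA`, the pull-out
property gives exactly this orthogonality with `k = c`.
-/

open MeasureTheory ProbabilityTheory Real Set Finset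
open scoped NNReal ENNReal Nat

lemma integral_pow_mul_exp_neg_half_sq (k : ℕ) :
    ∫ x : ℝ, x ^ (2 * k) * exp (-(1 / 2) * x ^ 2) = (2 * k - 1 : ℕ)‼ * √(2 * π) := by
  have habs : ∀ x : ℝ, x ^ (2 * k) * exp (-(1 / 2) * x ^ 2)
      = |x| ^ (2 * k) * exp (-(1 / 2) * |x| ^ 2) := fun x => by
    rw [pow_mul, pow_mul, sq_abs]
  have hIoi : ∫ x in Ioi (0 : ℝ), x ^ (2 * k) * exp (-(1 / 2) * x ^ 2)
      = ∫ x in Ioi (0 : ℝ), x ^ ((2 * k : ℕ) : ℝ) * exp (-(1 / 2) * x ^ (2 : ℝ)) :=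
    setIntegral_congr_fun measurableSet_Ioi fun x _ => by rw [rpow_natCast, rpow_two]
  have hpow : (1 / 2 : ℝ) ^ (-((2 * k : ℕ) + 1 : ℝ) / 2) = 2 ^ k * √2 := by
    rw [one_div, inv_rpow zero_le_two, ← rpow_neg zero_le_two, sqrt_eq_rpow, ← rpow_natCast,
      ← rpow_add zero_lt_two]
    congr 1
    push_cast
    ring
  have hGamma : Gamma (((2 * k : ℕ) + 1 : ℝ) / 2) = (2 * k - 1 : ℕ)‼ * √π / 2 ^ k := by
    rw [← Gamma_nat_add_half]
    congr 1
    push_cast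
    ring
  have hq : (-1 : ℝ) < (2 * k : ℕ) := lt_of_lt_of_le neg_one_lt_zero (Nat.cast_nonneg _)
  rw [integral_congr_ae (Filter.Eventually.of_forall habs),
    integral_comp_abs (f := fun x => x ^ (2 * k) * exp (-(1 / 2) * x ^ 2)), hIoi,
    integral_rpow_mul_exp_neg_mul_rpow two_pos hq one_half_pos, hpow, hGamma,
    sqrt_mul zero_le_two]
  field_simp

lemma integrable_pow_gaussianReal (m : ℝ) (v : ℝ≥0) (n : ℕ) :
    Integrable (fun x => x ^ n) (gaussianReal m v) :=
  ((memLp_id_gaussianReal' (n : ℝ≥0∞) (ENNReal.natCast_ne_top n)).integrable_norm_pow').mono'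
    (by fun_prop) (Filter.Eventually.of_forall fun x => (norm_pow x n).le)

lemma integral_pow_gaussianReal_of_odd (v : ℝ≥0) {n : ℕ} (hn : Odd n) :
    ∫ x, x ^ n ∂gaussianReal 0 v = 0 := by
  have h := integral_map (μ := gaussianReal 0 v) measurable_neg.aemeasurable
    (f := fun x : ℝ => x ^ n) (by fun_prop)
  rw [gaussianReal_map_neg, neg_zero] at h
  simp only [hn.neg_pow, integral_neg] at h
  linarith

lemma integral_pow_gaussianReal_of_even (k : ℕ) :
    ∫ x, x ^ (2 * k) ∂gaussianReal 0 1 = (2 * k - 1 : ℕ)‼ := by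
  have hpdf : ∀ x : ℝ, gaussianPDFReal 0 1 x • x ^ (2 * k)
      = (√(2 * π))⁻¹ * (x ^ (2 * k) * exp (-(1 / 2) * x ^ 2)) := fun x => by
    simp only [gaussianPDFReal, NNReal.coe_one, mul_one, sub_zero, smul_eq_mul]
    ring_nf
  simp_rw [integral_gaussianReal_eq_integral_smul one_ne_zero, hpdf, integral_const_mul,
    integral_pow_mul_exp_neg_half_sq]
  field_simp

-- For `n = 0` the truncated `n - 1 = 0` gives `0‼ = 1`, as it should.
lemma integral_pow_gaussianReal (n : ℕ) :
    ∫ x, x ^ n ∂gaussianReal 0 1 = if Even n then ((n - 1 : ℕ)‼ : ℝ) else 0 := by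
  split_ifs with hn
  · obtain ⟨k, rfl⟩ := hn
    rw [← two_mul, integral_pow_gaussianReal_of_even]
  · exact integral_pow_gaussianReal_of_odd 1 (Nat.not_even_iff_odd.mp hn)

lemma integrable_pow_uniform (n : ℕ) :
    Integrable (fun x => x ^ n) ((2⁻¹ : ℝ≥0∞) • volume.restrict (Icc (-1 : ℝ) 1)) :=
  ((continuous_pow n).integrableOn_Icc).integrable.smul_measure (by simp)

lemma integral_pow_uniform (n : ℕ) :
    ∫ x, x ^ n ∂((2⁻¹ : ℝ≥0∞) • volume.restrict (Icc (-1 : ℝ) 1))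
      = if Even n then 1 / (n + 1 : ℝ) else 0 := by
  rw [integral_smul_measure, integral_Icc_eq_integral_Ioc,
    ← intervalIntegral.integral_of_le (by norm_num), integral_pow]
  split_ifs with hn
  · rw [hn.add_one.neg_one_pow]
    simp only [ENNReal.toReal_inv, ENNReal.toReal_ofNat, one_pow, sub_neg_eq_add, smul_eq_mul,
      one_div]
    field_simp
    norm_num
  · rw [(Nat.not_even_iff_odd.mp hn).add_one.neg_one_pow]
    simp only [ENNReal.toReal_inv, ENNReal.toReal_ofNat, one_pow, sub_self, zero_div, smul_eq_mul,
      mul_zero]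

lemma pow_mul_add_pow_eq_sum (x y : ℝ) (a n : ℕ) :
    x ^ a * (x + y) ^ n = ∑ k ∈ range (n + 1), (n.choose k : ℝ) * (x ^ (a + k) * y ^ (n - k)) := by
  rw [add_pow, mul_sum]
  exact sum_congr rfl fun k _ => by ring

namespace ProbabilityTheory

lemma HasLaw.integrable_comp_of_integrable {Ω 𝓧 : Type*} [MeasurableSpace Ω] [MeasurableSpace 𝓧]
    {μ : Measure Ω} {ν : Measure 𝓧} {X : Ω → 𝓧} (hX : HasLaw X ν μ) {f : 𝓧 → ℝ}
    (hf : Integrable f ν) : Integrable (fun ω => f (X ω)) μ := by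
  rw [← hX.map_eq] at hf
  exact (integrable_map_measure hf.aestronglyMeasurable hX.aemeasurable).mp hf

section Moments
variable {Ω : Type*} [MeasurableSpace Ω] {μ : Measure Ω} {X Y : Ω → ℝ}

lemma IndepFun.integrable_pow_mul_pow (h : IndepFun X Y μ) {a b : ℕ}
    (hX : Integrable (fun ω => X ω ^ a) μ) (hY : Integrable (fun ω => Y ω ^ b) μ) :
    Integrable (fun ω => X ω ^ a * Y ω ^ b) μ :=
  (h.comp (measurable_id.pow_const a) (measurable_id.pow_const b)).integrable_mul hX hY

lemma IndepFun.integral_pow_mul_pow (h : IndepFun X Y μ) {a b : ℕ}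
    (hX : Integrable (fun ω => X ω ^ a) μ) (hY : Integrable (fun ω => Y ω ^ b) μ) :
    ∫ ω, X ω ^ a * Y ω ^ b ∂μ = (∫ ω, X ω ^ a ∂μ) * ∫ ω, Y ω ^ b ∂μ :=
  (h.comp (measurable_id.pow_const a) (measurable_id.pow_const b)).integral_mul_eq_mul_integral
    hX.aestronglyMeasurable hY.aestronglyMeasurable

lemma IndepFun.integrable_pow_mul_add_pow (h : IndepFun X Y μ)
    (hX : ∀ n : ℕ, Integrable (fun ω => X ω ^ n) μ)
    (hY : ∀ n : ℕ, Integrable (fun ω => Y ω ^ n) μ) (a n : ℕ) :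
    Integrable (fun ω => X ω ^ a * (X ω + Y ω) ^ n) μ := by
  simp_rw [pow_mul_add_pow_eq_sum]
  exact integrable_finsetSum _ fun k _ => ((h.integrable_pow_mul_pow (hX _) (hY _)).const_mul _)

lemma IndepFun.integral_pow_mul_add_pow (h : IndepFun X Y μ)
    (hX : ∀ n : ℕ, Integrable (fun ω => X ω ^ n) μ)
    (hY : ∀ n : ℕ, Integrable (fun ω => Y ω ^ n) μ) (a n : ℕ) :
    ∫ ω, X ω ^ a * (X ω + Y ω) ^ n ∂μ
      = ∑ k ∈ range (n + 1), (n.choose k : ℝ) *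
          ((∫ ω, X ω ^ (a + k) ∂μ) * ∫ ω, Y ω ^ (n - k) ∂μ) := by
  simp_rw [pow_mul_add_pow_eq_sum]
  rw [integral_finsetSum _ fun k _ => ((h.integrable_pow_mul_pow (hX _) (hY _)).const_mul _)]
  simp_rw [integral_const_mul, h.integral_pow_mul_pow (hX _) (hY _)]

lemma IndepFun.integrable_add_pow (h : IndepFun X Y μ)
    (hX : ∀ n : ℕ, Integrable (fun ω => X ω ^ n) μ)
    (hY : ∀ n : ℕ, Integrable (fun ω => Y ω ^ n) μ) (n : ℕ) :
    Integrable (fun ω => (X ω + Y ω) ^ n) μ := by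
  simpa using h.integrable_pow_mul_add_pow hX hY 0 n

lemma IndepFun.integral_add_pow (h : IndepFun X Y μ)
    (hX : ∀ n : ℕ, Integrable (fun ω => X ω ^ n) μ)
    (hY : ∀ n : ℕ, Integrable (fun ω => Y ω ^ n) μ) (n : ℕ) :
    ∫ ω, (X ω + Y ω) ^ n ∂μ
      = ∑ k ∈ range (n + 1), (n.choose k : ℝ) * ((∫ ω, X ω ^ k ∂μ) * ∫ ω, Y ω ^ (n - k) ∂μ) := by
  simpa using h.integral_pow_mul_add_pow hX hY 0 n

end Moments

end ProbabilityTheory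

section Regression
variable {Ω : Type*} [MeasurableSpace Ω] {μ : Measure Ω} {Z A : Ω → ℝ}

lemma integral_mul_pow_eq_of_forall_polynomial {k : ℝ}
    (hk : ∀ f : Polynomial ℝ, ∫ ω, (Z ω - k * A ω) * f.eval (A ω) ∂μ = 0)
    (hint : ∀ a n : ℕ, Integrable (fun ω => Z ω ^ a * A ω ^ n) μ) (n : ℕ) :
    ∫ ω, Z ω * A ω ^ n ∂μ = k * ∫ ω, A ω ^ (n + 1) ∂μ := by
  have hZA : Integrable (fun ω => Z ω * A ω ^ n) μ := by simpa using hint 1 n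
  have hA : Integrable (fun ω => A ω ^ (n + 1)) μ := by simpa using hint 0 (n + 1)
  have h := hk (Polynomial.X ^ n)
  simp only [Polynomial.eval_pow, Polynomial.eval_X, sub_mul, mul_assoc, ← pow_succ'] at h
  rwa [integral_sub hZA (hA.const_mul k), integral_const_mul, sub_eq_zero] at h

lemma integral_mul_pow_eq_of_condExp_eq_const_mul [IsFiniteMeasure μ] (hA : Measurable A)
    (hint : ∀ a n : ℕ, Integrable (fun ω => Z ω ^ a * A ω ^ n) μ) {c : ℝ}
    (hc : μ[Z | MeasurableSpace.comap A inferInstance] =ᵐ[μ] fun ω => c * A ω) (n : ℕ) :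
    ∫ ω, Z ω * A ω ^ n ∂μ = c * ∫ ω, A ω ^ (n + 1) ∂μ := by
  have hAn : StronglyMeasurable[MeasurableSpace.comap A inferInstance] fun ω => A ω ^ n :=
    ((comap_measurable A).pow_const n).stronglyMeasurable
  have hZA : Integrable (fun ω => Z ω * A ω ^ n) μ := by simpa using hint 1 n
  have hZ : Integrable Z μ := by simpa using hint 1 0
  have hpull := condExp_mul_of_stronglyMeasurable_right hAn hZA hZ
  calc ∫ ω, Z ω * A ω ^ n ∂μ
      = ∫ ω, (μ[fun ω => Z ω * A ω ^ n | MeasurableSpace.comap A inferInstance]) ω ∂μ :=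
        (integral_condExp hA.comap_le).symm
    _ = ∫ ω, c * A ω * A ω ^ n ∂μ := by
        refine integral_congr_ae ?_
        filter_upwards [hpull, hc] with ω hpullω hcω
        exact hpullω.trans (by rw [Pi.mul_apply, hcω])
    _ = c * ∫ ω, A ω ^ (n + 1) ∂μ := by
        simp_rw [mul_assoc, ← pow_succ']
        exact integral_const_mul c _

end Regression

section Model
variable {Ω : Type*} [MeasurableSpace Ω] {μ : Measure Ω} {Z U ε : Ω → ℝ}

lemma integrable_pow_mul_add_noise_pow (hZ : HasLaw Z (gaussianReal 0 1) μ)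
    (hU : HasLaw U (gaussianReal 0 1) μ)
    (hε : HasLaw ε ((2⁻¹ : ℝ≥0∞) • volume.restrict (Icc (-1 : ℝ) 1)) μ)
    (hZW : IndepFun Z (fun ω => U ω + ε ω) μ) (hUε : IndepFun U ε μ) (a n : ℕ) :
    Integrable (fun ω => Z ω ^ a * (Z ω + (U ω + ε ω)) ^ n) μ :=
  hZW.integrable_pow_mul_add_pow
    (fun n => hZ.integrable_comp_of_integrable (integrable_pow_gaussianReal 0 1 n))
    (hUε.integrable_add_pow
      (fun n => hU.integrable_comp_of_integrable (integrable_pow_gaussianReal 0 1 n))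
      (fun n => hε.integrable_comp_of_integrable (integrable_pow_uniform n))) a n

lemma moments_gaussian_add_noise [IsProbabilityMeasure μ] (hZ : HasLaw Z (gaussianReal 0 1) μ)
    (hU : HasLaw U (gaussianReal 0 1) μ)
    (hε : HasLaw ε ((2⁻¹ : ℝ≥0∞) • volume.restrict (Icc (-1 : ℝ) 1)) μ)
    (hZW : IndepFun Z (fun ω => U ω + ε ω) μ) (hUε : IndepFun U ε μ) :
    ∫ ω, Z ω * (Z ω + (U ω + ε ω)) ∂μ = 1 ∧
    ∫ ω, (Z ω + (U ω + ε ω)) ^ 2 ∂μ = 7 / 3 ∧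
    ∫ ω, Z ω * (Z ω + (U ω + ε ω)) ^ 3 ∂μ = 7 ∧
    ∫ ω, (Z ω + (U ω + ε ω)) ^ 4 ∂μ = 81 / 5 := by
  have hZn n := hZ.integrable_comp_of_integrable (integrable_pow_gaussianReal 0 1 n)
  have hUn n := hU.integrable_comp_of_integrable (integrable_pow_gaussianReal 0 1 n)
  have hεn n := hε.integrable_comp_of_integrable (integrable_pow_uniform n)
  have hZmom (n : ℕ) : ∫ ω, Z ω ^ n ∂μ = ∫ x, x ^ n ∂gaussianReal 0 1 :=
    hZ.integral_comp (f := fun x => x ^ n) (by fun_prop)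
  have hUmom (n : ℕ) : ∫ ω, U ω ^ n ∂μ = ∫ x, x ^ n ∂gaussianReal 0 1 :=
    hU.integral_comp (f := fun x => x ^ n) (by fun_prop)
  have hεmom (n : ℕ) :
      ∫ ω, ε ω ^ n ∂μ = ∫ x, x ^ n ∂((2⁻¹ : ℝ≥0∞) • volume.restrict (Icc (-1 : ℝ) 1)) :=
    hε.integral_comp (f := fun x => x ^ n) (by fun_prop)
  have hW := hUε.integral_add_pow hUn hεn
  have hmix := hZW.integral_pow_mul_add_pow hZn (hUε.integrable_add_pow hUn hεn)
  have h1 := hmix 1 1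
  have h2 := hmix 0 2
  have h3 := hmix 1 3
  have h4 := hmix 0 4
  simp only [hW, hZmom, hUmom, hεmom, sum_range_succ, integral_pow_gaussianReal,
    integral_pow_uniform] at h1 h2 h3 h4
  norm_num [Nat.choose] at h1 h2 h3 h4
  exact ⟨h1, h2, h3, h4⟩

end Model

/-- For Z, U ~ N(0,1) and ε_A ~ Uniform(-1,1) independent, with
A = Z + U + ε_A, one has E[ZA]/E[A²] = 3/7 and E[ZA³]/E[A⁴] = 35/81; since these
differ, there is no k with E[(Z - kA)·f(A)] = 0 for all polynomials f, hence
E(Z | A) is not a.s. linear in A. -/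
theorem stmt15 {Ω : Type*} [MeasurableSpace Ω] (μ : Measure Ω) [IsProbabilityMeasure μ]
    (Z U εA : Ω → ℝ) (hmZ : Measurable Z) (hmU : Measurable U) (hmε : Measurable εA)
    (hZ : Measure.map Z μ = gaussianReal 0 1)
    (hU : Measure.map U μ = gaussianReal 0 1)
    (hε : Measure.map εA μ = (2⁻¹ : ENNReal) • volume.restrict (Set.Icc (-1 : ℝ) 1))
    (hindep : iIndepFun ![Z, U, εA] μ)
    (A : Ω → ℝ) (hA : ∀ ω, A ω = Z ω + U ω + εA ω) :
    (∫ ω, Z ω * A ω ∂μ) / (∫ ω, A ω ^ 2 ∂μ) = 3 / 7 ∧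
    (∫ ω, Z ω * A ω ^ 3 ∂μ) / (∫ ω, A ω ^ 4 ∂μ) = 35 / 81 ∧
    (¬ ∃ k : ℝ, ∀ f : Polynomial ℝ,
      ∫ ω, (Z ω - k * A ω) * f.eval (A ω) ∂μ = 0) ∧
    ¬ ∃ c : ℝ, μ[Z | MeasurableSpace.comap A inferInstance]
        =ᵐ[μ] fun ω => c * A ω := by
  have hmeas : ∀ i, Measurable (![Z, U, εA] i) := by
    intro i; fin_cases i <;> assumption
  have hZW : IndepFun Z (fun ω => U ω + εA ω) μ :=
    hindep.indepFun_add_right hmeas 0 1 2 (by decide) (by decide)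
  have hUε : IndepFun U εA μ := hindep.indepFun (i := 1) (j := 2) (by decide)
  have hZ' : HasLaw Z (gaussianReal 0 1) μ := ⟨hmZ.aemeasurable, hZ⟩
  have hU' : HasLaw U (gaussianReal 0 1) μ := ⟨hmU.aemeasurable, hU⟩
  have hε' : HasLaw εA ((2⁻¹ : ℝ≥0∞) • volume.restrict (Icc (-1 : ℝ) 1)) μ :=
    ⟨hmε.aemeasurable, hε⟩
  obtain rfl : A = fun ω => Z ω + (U ω + εA ω) := funext fun ω => (hA ω).trans (add_assoc _ _ _)
  obtain ⟨hZA, hA2, hZA3, hA4⟩ := moments_gaussian_add_noise hZ' hU' hε' hZW hUε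
  have hint := integrable_pow_mul_add_noise_pow hZ' hU' hε' hZW hUε
  refine ⟨by rw [hZA, hA2]; norm_num, by rw [hZA3, hA4]; norm_num, ?_, ?_⟩
  · rintro ⟨k, hk⟩
    have h1 := integral_mul_pow_eq_of_forall_polynomial hk hint 1
    have h3 := integral_mul_pow_eq_of_forall_polynomial hk hint 3
    norm_num [hZA, hA2, hZA3, hA4] at h1 h3
    linarith
  · rintro ⟨c, hc⟩
    have hmA : Measurable fun ω => Z ω + (U ω + εA ω) := hmZ.add (hmU.add hmε)
    have h1 := integral_mul_pow_eq_of_condExp_eq_const_mul hmA hint hc 1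
    have h3 := integral_mul_pow_eq_of_condExp_eq_const_mul hmA hint hc 3
    norm_num [hZA, hA2, hZA3, hA4] at h1 h3
    linarith
end

section
/- Let ζ, ε be independent integrable random variables and suppose E[(1-c)ζ - cε | ζ + ε] = 0 a.s. for a constant c. Then for all t ∈ ℝ, (1-c)·E[ζe^{itζ}]·E[e^{itε}] = c·E[εe^{itε}]·E[e^{itζ}]. -/
open MeasureTheory ProbabilityTheory

/-- Integrable times bounded (on the right) is integrable. -/
lemma aux_mul_bdd {Ω : Type*} [MeasurableSpace Ω] {μ : Measure Ω} {F : Type*}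
    [NormedField F] {f b : Ω → F} (hf : Integrable f μ)
    (hb : AEStronglyMeasurable b μ) (hbd : ∃ C, ∀ ω, ‖b ω‖ ≤ C) :
    Integrable (fun ω => f ω * b ω) μ := by
  exact (Integrable.bdd_mul hf hb (Filter.Eventually.of_forall hbd.choose_spec)).congr (Filter.Eventually.of_forall fun ω => mul_comm (b ω) (f ω))

/-- Product formula for independent complex random variables. -/
lemma aux_indep_mul {Ω : Type*} [MeasurableSpace Ω] {μ : Measure Ω} [IsProbabilityMeasure μ]
    {f g : Ω → ℂ} (h : IndepFun f g μ) (hf : Integrable f μ) (hg : Integrable g μ) :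
    ∫ ω, f ω * g ω ∂μ = (∫ ω, f ω ∂μ) * ∫ ω, g ω ∂μ := by
  have hfr : Integrable (fun ω => (f ω).re) μ := by simpa using hf.re
  have hfi : Integrable (fun ω => (f ω).im) μ := by simpa using hf.im
  have hgr : Integrable (fun ω => (g ω).re) μ := by simpa using hg.re
  have hgi : Integrable (fun ω => (g ω).im) μ := by simpa using hg.im
  have hrr : IndepFun (fun ω => (f ω).re) (fun ω => (g ω).re) μ :=
    h.comp Complex.measurable_re Complex.measurable_re
  have hri : IndepFun (fun ω => (f ω).re) (fun ω => (g ω).im) μ :=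
    h.comp Complex.measurable_re Complex.measurable_im
  have hir : IndepFun (fun ω => (f ω).im) (fun ω => (g ω).re) μ :=
    h.comp Complex.measurable_im Complex.measurable_re
  have hii : IndepFun (fun ω => (f ω).im) (fun ω => (g ω).im) μ :=
    h.comp Complex.measurable_im Complex.measurable_im
  have e1 := hrr.integral_fun_mul_eq_mul_integral hfr.1 hgr.1
  have e2 := hri.integral_fun_mul_eq_mul_integral hfr.1 hgi.1
  have e3 := hir.integral_fun_mul_eq_mul_integral hfi.1 hgr.1
  have e4 := hii.integral_fun_mul_eq_mul_integral hfi.1 hgi.1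
  have i1 : Integrable (fun ω => (f ω).re * (g ω).re) μ := hrr.integrable_mul hfr hgr
  have i2 : Integrable (fun ω => (f ω).re * (g ω).im) μ := hri.integrable_mul hfr hgi
  have i3 : Integrable (fun ω => (f ω).im * (g ω).re) μ := hir.integrable_mul hfi hgr
  have i4 : Integrable (fun ω => (f ω).im * (g ω).im) μ := hii.integrable_mul hfi hgi
  have key : (fun ω => f ω * g ω) = fun ω =>
      (((f ω).re * (g ω).re - (f ω).im * (g ω).im : ℝ) : ℂ) +
        (((f ω).re * (g ω).im + (f ω).im * (g ω).re : ℝ) : ℂ) * Complex.I := by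
    funext ω
    apply Complex.ext <;> simp [Complex.mul_re, Complex.mul_im]
  have j1 : Integrable (fun ω => (((f ω).re * (g ω).re - (f ω).im * (g ω).im : ℝ) : ℂ)) μ :=
    (i1.sub i4).ofReal
  have j2 : Integrable
      (fun ω => (((f ω).re * (g ω).im + (f ω).im * (g ω).re : ℝ) : ℂ) * Complex.I) μ :=
    ((i2.add i3).ofReal).mul_const _
  have o1 : ∫ a, (((f a).re * (g a).re - (f a).im * (g a).im : ℝ) : ℂ) ∂μ =
      ((∫ a, ((f a).re * (g a).re - (f a).im * (g a).im) ∂μ : ℝ) : ℂ) := integral_ofReal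
  have o2 : ∫ a, (((f a).re * (g a).im + (f a).im * (g a).re : ℝ) : ℂ) ∂μ =
      ((∫ a, ((f a).re * (g a).im + (f a).im * (g a).re) ∂μ : ℝ) : ℂ) := integral_ofReal
  have F1 : ∫ ω, f ω ∂μ =
      ((∫ ω, (f ω).re ∂μ : ℝ) : ℂ) + ((∫ ω, (f ω).im ∂μ : ℝ) : ℂ) * Complex.I := by
    simpa using (integral_re_add_im hf).symm
  have G1 : ∫ ω, g ω ∂μ =
      ((∫ ω, (g ω).re ∂μ : ℝ) : ℂ) + ((∫ ω, (g ω).im ∂μ : ℝ) : ℂ) * Complex.I := by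
    simpa using (integral_re_add_im hg).symm
  rw [key, integral_add j1 j2, integral_mul_const, o1, o2,
    integral_sub i1 i4, integral_add i2 i3, e1, e2, e3, e4, F1, G1]
  push_cast
  linear_combination (-((∫ ω, (f ω).im ∂μ : ℝ) : ℂ) * ((∫ ω, (g ω).im ∂μ : ℝ) : ℂ)) *
    Complex.I_sq


/-- Integrating `X` against a bounded function of `S` gives 0 when `E[X | σ(S)] = 0`. -/
lemma aux_key {Ω : Type*} [MeasurableSpace Ω] {μ : Measure Ω} [IsProbabilityMeasure μ]
    {S X : Ω → ℝ} (hmS : Measurable S) (hXint : Integrable X μ)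
    (hcond : μ[X | MeasurableSpace.comap S inferInstance] =ᵐ[μ] fun _ => (0 : ℝ))
    {φ : ℝ → ℝ} (hφ : Measurable φ) (hb : ∀ x, |φ x| ≤ 1) :
    ∫ ω, X ω * φ (S ω) ∂μ = 0 := by
  have hm : MeasurableSpace.comap S inferInstance ≤ (by infer_instance : MeasurableSpace Ω) :=
    hmS.comap_le
  have hSmm : Measurable[MeasurableSpace.comap S inferInstance] S :=
    Measurable.of_comap_le le_rfl
  have hfSM : StronglyMeasurable[MeasurableSpace.comap S inferInstance] (fun ω => φ (S ω)) :=
    (hφ.comp hSmm).stronglyMeasurable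
  have hbd : ∀ᵐ ω ∂μ, ‖φ (S ω)‖ ≤ 1 :=
    Filter.Eventually.of_forall fun ω => by simpa [Real.norm_eq_abs] using hb (S ω)
  have hpull := condExp_stronglyMeasurable_mul_of_bound hm hfSM hXint 1 hbd
  have h0 : (fun ω => φ (S ω)) * μ[X | MeasurableSpace.comap S inferInstance] =ᵐ[μ] 0 := by
    filter_upwards [hcond] with ω hω
    simp only [Pi.mul_apply, Pi.zero_apply, hω, mul_zero]
  have hmulint : Integrable ((fun ω => φ (S ω)) * X) μ := by
    have := aux_mul_bdd hXint (hφ.comp hmS).aestronglyMeasurable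
      ⟨1, fun ω => by simpa [Real.norm_eq_abs] using hb (S ω)⟩
    exact this.congr (Filter.Eventually.of_forall fun ω => mul_comm _ _)
  have hint0 : ∫ ω, ((fun ω => φ (S ω)) * X) ω ∂μ = 0 := by
    rw [← integral_condExp hm, integral_congr_ae (hpull.trans h0)]
    simp
  calc ∫ ω, X ω * φ (S ω) ∂μ = ∫ ω, ((fun ω => φ (S ω)) * X) ω ∂μ := by
        refine integral_congr_ae (Filter.Eventually.of_forall fun ω => ?_)
        simp [mul_comm]
    _ = 0 := hint0

/-- If ζ, ε are independent integrable random variables and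
E[(1-c)ζ - cε | ζ + ε] = 0 a.s., then for all t,
(1-c)·E[ζe^{itζ}]·E[e^{itε}] = c·E[εe^{itε}]·E[e^{itζ}]. -/
theorem stmt18 {Ω : Type*} [MeasurableSpace Ω] (μ : Measure Ω) [IsProbabilityMeasure μ]
    (ζ ε : Ω → ℝ) (hmζ : Measurable ζ) (hmε : Measurable ε)
    (hindep : IndepFun ζ ε μ)
    (hζint : Integrable ζ μ) (hεint : Integrable ε μ)
    (c : ℝ)
    (hcond : μ[fun ω => (1 - c) * ζ ω - c * ε ω |
        MeasurableSpace.comap (fun ω => ζ ω + ε ω) inferInstance]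
      =ᵐ[μ] (fun _ => (0 : ℝ))) :
    ∀ t : ℝ,
      ((1 - c : ℝ) : ℂ) *
          (∫ ω, (ζ ω : ℂ) * Complex.exp (Complex.I * (t : ℂ) * (ζ ω : ℂ)) ∂μ) *
          (∫ ω, Complex.exp (Complex.I * (t : ℂ) * (ε ω : ℂ)) ∂μ) =
        (c : ℂ) *
          (∫ ω, (ε ω : ℂ) * Complex.exp (Complex.I * (t : ℂ) * (ε ω : ℂ)) ∂μ) *
          (∫ ω, Complex.exp (Complex.I * (t : ℂ) * (ζ ω : ℂ)) ∂μ) := by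
  intro t
  set S : Ω → ℝ := fun ω => ζ ω + ε ω with hS
  have hmS : Measurable S := hmζ.add hmε
  set X : Ω → ℝ := fun ω => (1 - c) * ζ ω - c * ε ω with hX
  have hXint : Integrable X μ := (hζint.const_mul _).sub (hεint.const_mul _)
  have key0 : ∀ φ : ℝ → ℝ, Measurable φ → (∀ x, |φ x| ≤ 1) →
      ∫ ω, X ω * φ (S ω) ∂μ = 0 := fun φ hφ hb => aux_key hmS hXint hcond hφ hb
  have hcos := key0 (fun x => Real.cos (t * x))
    (Real.measurable_cos.comp (measurable_const.mul measurable_id))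
    (fun x => Real.abs_cos_le_one _)
  have hsin := key0 (fun x => Real.sin (t * x))
    (Real.measurable_sin.comp (measurable_const.mul measurable_id))
    (fun x => Real.abs_sin_le_one _)
  -- Step 2: complex version
  have hident : ∀ (r s : ℝ), (r : ℂ) * Complex.exp (Complex.I * (t : ℂ) * (s : ℂ)) =
      ((r * Real.cos (t * s) : ℝ) : ℂ) + ((r * Real.sin (t * s) : ℝ) : ℂ) * Complex.I := by
    intro r s
    have h1 : Complex.I * (t : ℂ) * (s : ℂ) = ((t * s : ℝ) : ℂ) * Complex.I := by
      push_cast; ring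
    rw [h1, Complex.exp_mul_I, ← Complex.ofReal_cos, ← Complex.ofReal_sin]
    push_cast
    ring
  have intc : Integrable (fun ω => X ω * Real.cos (t * S ω)) μ :=
    aux_mul_bdd hXint
      ((Real.measurable_cos.comp (measurable_const.mul hmS)).aestronglyMeasurable)
      ⟨1, fun ω => by simpa [Real.norm_eq_abs] using Real.abs_cos_le_one (t * S ω)⟩
  have ints : Integrable (fun ω => X ω * Real.sin (t * S ω)) μ :=
    aux_mul_bdd hXint
      ((Real.measurable_sin.comp (measurable_const.mul hmS)).aestronglyMeasurable)
      ⟨1, fun ω => by simpa [Real.norm_eq_abs] using Real.abs_sin_le_one (t * S ω)⟩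
  have oc : ∫ ω, ((X ω * Real.cos (t * S ω) : ℝ) : ℂ) ∂μ =
      ((∫ ω, X ω * Real.cos (t * S ω) ∂μ : ℝ) : ℂ) := integral_ofReal
  have os : ∫ ω, ((X ω * Real.sin (t * S ω) : ℝ) : ℂ) ∂μ =
      ((∫ ω, X ω * Real.sin (t * S ω) ∂μ : ℝ) : ℂ) := integral_ofReal
  have hC0 : ∫ ω, (X ω : ℂ) * Complex.exp (Complex.I * (t : ℂ) * (S ω : ℂ)) ∂μ = 0 := by
    have jc : Integrable (fun ω => ((X ω * Real.cos (t * S ω) : ℝ) : ℂ)) μ := intc.ofReal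
    have js : Integrable (fun ω => ((X ω * Real.sin (t * S ω) : ℝ) : ℂ) * Complex.I) μ :=
      ints.ofReal.mul_const _
    simp_rw [hident]
    rw [integral_add jc js, integral_mul_const, oc, os, hcos, hsin]
    simp
  -- boundedness of the exponentials
  have hbexp : ∀ x : ℝ, ‖Complex.exp (Complex.I * (t : ℂ) * (x : ℂ))‖ ≤ 1 := by
    intro x
    have h1 : Complex.I * (t : ℂ) * (x : ℂ) = ((t * x : ℝ) : ℂ) * Complex.I := by
      push_cast; ring
    rw [h1, Complex.norm_exp_ofReal_mul_I]
  have hmexpζ : Measurable fun ω => Complex.exp (Complex.I * (t : ℂ) * (ζ ω : ℂ)) :=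
    Complex.measurable_exp.comp (measurable_const.mul (Complex.measurable_ofReal.comp hmζ))
  have hmexpε : Measurable fun ω => Complex.exp (Complex.I * (t : ℂ) * (ε ω : ℂ)) :=
    Complex.measurable_exp.comp (measurable_const.mul (Complex.measurable_ofReal.comp hmε))
  have hmexpS : Measurable fun ω => Complex.exp (Complex.I * (t : ℂ) * (S ω : ℂ)) :=
    Complex.measurable_exp.comp (measurable_const.mul (Complex.measurable_ofReal.comp hmS))
  have intζe : Integrable (fun ω => (ζ ω : ℂ) * Complex.exp (Complex.I * (t : ℂ) * (ζ ω : ℂ))) μ :=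
    aux_mul_bdd hζint.ofReal hmexpζ.aestronglyMeasurable ⟨1, fun ω => hbexp _⟩
  have intεe : Integrable (fun ω => (ε ω : ℂ) * Complex.exp (Complex.I * (t : ℂ) * (ε ω : ℂ))) μ :=
    aux_mul_bdd hεint.ofReal hmexpε.aestronglyMeasurable ⟨1, fun ω => hbexp _⟩
  have inteζ : Integrable (fun ω => Complex.exp (Complex.I * (t : ℂ) * (ζ ω : ℂ))) μ := by
    have := (integrable_const (1 : ℂ)).bdd_mul (μ := μ) hmexpζ.aestronglyMeasurable
      (Filter.Eventually.of_forall fun ω => hbexp _)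
    exact this.congr (Filter.Eventually.of_forall fun ω => mul_one _)
  have inteε : Integrable (fun ω => Complex.exp (Complex.I * (t : ℂ) * (ε ω : ℂ))) μ := by
    have := (integrable_const (1 : ℂ)).bdd_mul (μ := μ) hmexpε.aestronglyMeasurable
      (Filter.Eventually.of_forall fun ω => hbexp _)
    exact this.congr (Filter.Eventually.of_forall fun ω => mul_one _)
  have intζeS : Integrable (fun ω => (ζ ω : ℂ) * Complex.exp (Complex.I * (t : ℂ) * (S ω : ℂ))) μ :=
    aux_mul_bdd hζint.ofReal hmexpS.aestronglyMeasurable ⟨1, fun ω => hbexp _⟩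
  have intεeS : Integrable (fun ω => (ε ω : ℂ) * Complex.exp (Complex.I * (t : ℂ) * (S ω : ℂ))) μ :=
    aux_mul_bdd hεint.ofReal hmexpS.aestronglyMeasurable ⟨1, fun ω => hbexp _⟩
  -- Step 3: split the integral
  have hexpadd : ∀ ω, Complex.exp (Complex.I * (t : ℂ) * (S ω : ℂ)) =
      Complex.exp (Complex.I * (t : ℂ) * (ζ ω : ℂ)) *
        Complex.exp (Complex.I * (t : ℂ) * (ε ω : ℂ)) := by
    intro ω
    rw [← Complex.exp_add]
    congr 1
    simp only [hS]
    push_cast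
    ring
  have hsplit : ∫ ω, (X ω : ℂ) * Complex.exp (Complex.I * (t : ℂ) * (S ω : ℂ)) ∂μ =
      ((1 - c : ℝ) : ℂ) * ∫ ω, (ζ ω : ℂ) * Complex.exp (Complex.I * (t : ℂ) * (S ω : ℂ)) ∂μ -
        (c : ℂ) * ∫ ω, (ε ω : ℂ) * Complex.exp (Complex.I * (t : ℂ) * (S ω : ℂ)) ∂μ := by
    rw [← integral_const_mul, ← integral_const_mul, ← integral_sub ((intζeS.const_mul _))
      ((intεeS.const_mul _))]
    refine integral_congr_ae (Filter.Eventually.of_forall fun ω => ?_)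
    simp only [hX]
    push_cast
    ring
  -- Step 4: factor using independence
  have hfac1 : ∫ ω, (ζ ω : ℂ) * Complex.exp (Complex.I * (t : ℂ) * (S ω : ℂ)) ∂μ =
      (∫ ω, (ζ ω : ℂ) * Complex.exp (Complex.I * (t : ℂ) * (ζ ω : ℂ)) ∂μ) *
        ∫ ω, Complex.exp (Complex.I * (t : ℂ) * (ε ω : ℂ)) ∂μ := by
    have hi : IndepFun (fun ω => (ζ ω : ℂ) * Complex.exp (Complex.I * (t : ℂ) * (ζ ω : ℂ)))
        (fun ω => Complex.exp (Complex.I * (t : ℂ) * (ε ω : ℂ))) μ :=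
      hindep.comp (Measurable.mul Complex.measurable_ofReal
        (Complex.measurable_exp.comp (measurable_const.mul Complex.measurable_ofReal)))
        (Complex.measurable_exp.comp (measurable_const.mul Complex.measurable_ofReal))
    rw [← aux_indep_mul hi intζe inteε]
    refine integral_congr_ae (Filter.Eventually.of_forall fun ω => ?_)
    simp only [hexpadd ω]
    ring
  have hfac2 : ∫ ω, (ε ω : ℂ) * Complex.exp (Complex.I * (t : ℂ) * (S ω : ℂ)) ∂μ =
      (∫ ω, Complex.exp (Complex.I * (t : ℂ) * (ζ ω : ℂ)) ∂μ) *
        ∫ ω, (ε ω : ℂ) * Complex.exp (Complex.I * (t : ℂ) * (ε ω : ℂ)) ∂μ := by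
    have hi : IndepFun (fun ω => Complex.exp (Complex.I * (t : ℂ) * (ζ ω : ℂ)))
        (fun ω => (ε ω : ℂ) * Complex.exp (Complex.I * (t : ℂ) * (ε ω : ℂ))) μ :=
      hindep.comp (Complex.measurable_exp.comp (measurable_const.mul Complex.measurable_ofReal))
        (Measurable.mul Complex.measurable_ofReal
          (Complex.measurable_exp.comp (measurable_const.mul Complex.measurable_ofReal)))
    rw [← aux_indep_mul hi inteζ intεe]
    refine integral_congr_ae (Filter.Eventually.of_forall fun ω => ?_)
    simp only [hexpadd ω]
    ring
  rw [hsplit, hfac1, hfac2] at hC0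
  linear_combination hC0
end
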